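/- arXiv:0903.4501 — 3 statements merged into one kernel-verified Lean document; each statement's English description precedes it below -/
import Mathlib

section
/- Let n ≥ 1 and let φ: 𝔽₂[t₁,…,t_n] → 𝔽₂[t₁,…,t_n] be the ring homomorphism with φ(tᵢ)=tᵢ+tᵢ². For 1 ≤ m ≤ n, the homogeneous component of polynomial degree m+1 of φ(e_m) equals e₁·e_m + (m+1)·e_{m+1}, where e_k denotes the k-th elementary symmetric polynomial in t₁,…,t_n (with e_k := 0 for k > n) and (m+1) is reduced mod 2. -/
/-!
Writing `φ(e_m) = ∑_{|S| = m} ∏_{i ∈ S} tᵢ(1 + tᵢ)`, the degree `m + 1` part of each product is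
`∑_{j ∈ S} t_j ∏_{i ∈ S} tᵢ`. Splitting `e₁ e_m = ∑_{|S| = m} ∑_j t_j ∏_{i ∈ S} tᵢ` according to
whether `j ∈ S`, the terms with `j ∉ S` count every `(m + 1)`-subset `m + 1` times. Hence over any
commutative semiring the degree `m + 1` part of `φ(e_m)` plus `(m + 1) e_{m+1}` is `e₁ e_m`, and in
characteristic 2 the summand `(m + 1) e_{m+1}` may be moved to the other side.
-/

open MvPolynomial Finset

theorem Finset.sum_powersetCard_sum_sdiff_insert {α M : Type*} [DecidableEq α] [AddCommMonoid M]
    (s : Finset α) (m : ℕ) (f : Finset α → M) :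
    ∑ t ∈ powersetCard m s, ∑ j ∈ s \ t, f (insert j t) =
      (m + 1) • ∑ u ∈ powersetCard (m + 1) s, f u := by
  have hcard : ∀ u ∈ powersetCard (m + 1) s, (m + 1) • f u = ∑ _j ∈ u, f u := fun u hu => by
    rw [sum_const, (mem_powersetCard.mp hu).2]
  rw [smul_sum, sum_congr rfl hcard, sum_sigma', sum_sigma']
  refine sum_nbij' (fun p => ⟨insert p.2 p.1, p.2⟩) (fun q => ⟨q.1.erase q.2, q.2⟩)
    ?_ ?_ ?_ ?_ (fun _ _ => rfl)
  · rintro ⟨t, j⟩ h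
    simp only [mem_sigma, mem_powersetCard, mem_sdiff] at h ⊢
    exact ⟨⟨insert_subset h.2.1 h.1.1, by rw [card_insert_of_notMem h.2.2, h.1.2]⟩,
      mem_insert_self _ _⟩
  · rintro ⟨u, j⟩ h
    simp only [mem_sigma, mem_powersetCard, mem_sdiff] at h ⊢
    exact ⟨⟨(erase_subset _ _).trans h.1.1, by rw [card_erase_of_mem h.2, h.1.2]; rfl⟩,
      h.1.1 h.2, notMem_erase _ _⟩
  · rintro ⟨t, j⟩ h
    simp only [mem_sigma, mem_sdiff] at h
    simp [erase_insert h.2.2]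
  · rintro ⟨u, j⟩ h
    simp only [mem_sigma] at h
    simp [insert_erase h.2]

variable {σ R : Type*} [CommSemiring R]

theorem isHomogeneous_prod_X_sq_mul_prod_sdiff_X [DecidableEq σ] {s t : Finset σ} (ht : t ⊆ s) :
    ((∏ i ∈ t, X i ^ 2) * ∏ i ∈ s \ t, X i : MvPolynomial σ R).IsHomogeneous (#s + #t) := by
  have hsq : (∏ i ∈ t, X i ^ 2 : MvPolynomial σ R).IsHomogeneous (∑ _i ∈ t, 2) :=
    IsHomogeneous.prod t _ _ fun i _ => isHomogeneous_X_pow i 2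
  have hlin : (∏ i ∈ s \ t, X i : MvPolynomial σ R).IsHomogeneous (∑ _i ∈ s \ t, 1) :=
    IsHomogeneous.prod _ _ _ fun i _ => isHomogeneous_X R i
  have h := hsq.mul hlin
  convert h using 1
  simp only [sum_const, smul_eq_mul, mul_one, card_sdiff_of_subset ht]
  have := card_le_card ht
  omega

theorem homogeneousComponent_card_add_one_prod_X_add_X_sq (s : Finset σ) :
    homogeneousComponent (#s + 1) (∏ i ∈ s, (X i + X i ^ 2 : MvPolynomial σ R)) =
      ∑ j ∈ s, X j * ∏ i ∈ s, X i := by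
  classical
  simp_rw [add_comm (X _), prod_add, map_sum]
  rw [sum_congr rfl fun t ht => homogeneousComponent_of_mem
    (isHomogeneous_prod_X_sq_mul_prod_sdiff_X (mem_powerset.mp ht))]
  simp only [Nat.add_left_cancel_iff, eq_comm (a := 1), ← sum_filter, ← powersetCard_eq_filter,
    powersetCard_one, sum_map, Function.Embedding.coeFn_mk, prod_singleton,
    sdiff_singleton_eq_erase]
  refine sum_congr rfl fun j hj => ?_
  rw [sq, mul_assoc, mul_prod_erase s _ hj]

variable [Fintype σ]

theorem homogeneousComponent_aeval_X_add_X_sq_esymm (m : ℕ) :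
    homogeneousComponent (m + 1)
        (aeval (fun i => (X i + X i ^ 2 : MvPolynomial σ R)) (esymm σ R m)) =
      ∑ t ∈ powersetCard m univ, ∑ j ∈ t, X j * ∏ i ∈ t, X i := by
  simp only [esymm, map_sum, map_prod, aeval_X]
  refine sum_congr rfl fun t ht => ?_
  rw [← (mem_powersetCard.mp ht).2, homogeneousComponent_card_add_one_prod_X_add_X_sq]

theorem esymm_one_mul_esymm (m : ℕ) :
    esymm σ R 1 * esymm σ R m =
      ∑ t ∈ powersetCard m univ, ∑ j ∈ t, X j * ∏ i ∈ t, X i + (m + 1) • esymm σ R (m + 1) := by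
  classical
  have hinsert : ∀ t ∈ powersetCard m univ, ∀ j ∈ univ \ t,
      (X j * ∏ i ∈ t, X i : MvPolynomial σ R) = ∏ i ∈ insert j t, X i := fun t _ j hj =>
    (prod_insert (mem_sdiff.mp hj).2).symm
  rw [esymm.eq_1 σ R (m + 1), ← sum_powersetCard_sum_sdiff_insert, esymm_one, esymm.eq_1 σ R m,
    sum_mul_sum, sum_comm, ← sum_congr rfl fun t ht => sum_congr rfl (hinsert t ht),
    ← sum_add_distrib]
  exact sum_congr rfl fun t _ => (sum_add_sum_compl t _).symm

theorem stmt_3_general (n : ℕ) (m : ℕ) :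
    homogeneousComponent (m + 1)
      (aeval (fun i => X i + (X i) ^ 2) (esymm (Fin n) (ZMod 2) m)) =
    esymm (Fin n) (ZMod 2) 1 * esymm (Fin n) (ZMod 2) m
      + C ((m + 1 : ℕ) : ZMod 2) * esymm (Fin n) (ZMod 2) (m + 1) := by
  rw [homogeneousComponent_aeval_X_add_X_sq_esymm, esymm_one_mul_esymm, map_natCast,
    ← nsmul_eq_mul, add_assoc, CharTwo.add_self_eq_zero, add_zero]

/-- Mod 2 Wu formula Sq²c_m = c₁c_m + (m+1)c_{m+1} as an identity of symmetric
polynomials via the total Steenrod square φ(tᵢ) = tᵢ + tᵢ². -/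
theorem stmt_3 (n : ℕ) (hn : 1 ≤ n) (m : ℕ) (hm1 : 1 ≤ m) (hmn : m ≤ n) :
    homogeneousComponent (m + 1)
      (aeval (fun i => X i + (X i) ^ 2) (esymm (Fin n) (ZMod 2) m)) =
    esymm (Fin n) (ZMod 2) 1 * esymm (Fin n) (ZMod 2) m
      + C ((m + 1 : ℕ) : ZMod 2) * esymm (Fin n) (ZMod 2) (m + 1) :=
  stmt_3_general n m
end

section
/- Let n ≥ 1 and let ψ: 𝔽₃[t₁,…,t_n] → 𝔽₃[t₁,…,t_n] be the ring homomorphism with ψ(tᵢ)=tᵢ+tᵢ³. For 1 ≤ m ≤ n, the homogeneous component of polynomial degree m+2 of ψ(e_m) equals (m+2)·e_{m+2} − e₁·e_{m+1} + (e₁²+e₂)·e_m, where e_k is the k-th elementary symmetric polynomial in t₁,…,t_n (e_k := 0 for k > n) and (m+2) is reduced mod 3. -/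
/-!
Write `m_(a,1^r)` for the sum of all monomials `tᵢ^a · t_A` with `|A| = r` and `i ∉ A`. Expanding
`∏_{i ∈ S} (tᵢ³ + tᵢ)` over the `(m+1)`-sets `S`, the degree `m + 2` part of `ψ(e_m)` picks exactly
one cubed factor, so it is `m_(3,1^(m-1))`. Splitting `p_a · e_(r+1)` according to whether the index
of the power lies in the set gives `p_a e_(r+1) = m_(a+1,1^r) + m_(a,1^(r+1))`, which telescopes to
`m_(a,1^r) = ± ∑ᵢ (-1)ⁱ eᵢ p_(a+r-i)`. Comparing with Newton's identity for `(m+2) e_(m+2)` leaves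
`m_(3,1^(m-1)) = (m+2) e_(m+2) - e₁ e_(m+1) + p₂ e_m`, and `p₂ = e₁² - 2e₂ = e₁² + e₂` mod 3.
-/

open MvPolynomial Finset

theorem Finset.sum_powersetCard_succ_sum_erase {σ M : Type*} [Fintype σ] [DecidableEq σ]
    [AddCommMonoid M] (r : ℕ) (F : Finset σ → σ → M) :
    ∑ S ∈ powersetCard (r + 1) (univ : Finset σ), ∑ i ∈ S, F (S.erase i) i
      = ∑ A ∈ powersetCard r (univ : Finset σ), ∑ i ∈ Aᶜ, F A i := by
  rw [sum_sigma', sum_sigma']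
  refine sum_nbij' (fun x => ⟨x.1.erase x.2, x.2⟩) (fun x => ⟨insert x.2 x.1, x.2⟩)
    ?_ ?_ ?_ ?_ fun _ _ => rfl
  · rintro ⟨S, i⟩ h
    simp only [mem_sigma, mem_powersetCard_univ, mem_compl] at h ⊢
    exact ⟨by rw [card_erase_of_mem h.2, h.1, Nat.add_sub_cancel], notMem_erase _ _⟩
  · rintro ⟨A, i⟩ h
    simp only [mem_sigma, mem_powersetCard_univ, mem_compl] at h ⊢
    exact ⟨by rw [card_insert_of_notMem h.2, h.1], mem_insert_self _ _⟩
  · rintro ⟨S, i⟩ h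
    simp only [mem_sigma] at h
    simp [insert_erase h.2]
  · rintro ⟨A, i⟩ h
    simp only [mem_sigma, mem_compl] at h
    simp [erase_insert h.2]

namespace MvPolynomial

section Newton

variable (σ R : Type*) [Fintype σ] [CommRing R]

theorem mul_esymm_eq_sum_range (k : ℕ) :
    k * esymm σ R k
      = (-1) ^ (k + 1) * ∑ i ∈ range k, (-1) ^ i * esymm σ R i * psum σ R (k - i) := by
  rw [mul_esymm_eq_sum, sum_filter, Nat.sum_antidiagonal_eq_sum_range_succ_mk, sum_range_succ]
  simp only [lt_self_iff_false, if_false, add_zero]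
  exact congrArg _ (sum_congr rfl fun i hi => if_pos (mem_range.mp hi))

theorem psum_two : psum σ R 2 = esymm σ R 1 ^ 2 - 2 * esymm σ R 2 := by
  have newton := mul_esymm_eq_sum_range σ R 2
  simp only [sum_range_succ, range_zero, sum_empty, esymm_zero] at newton
  rw [psum_one, ← esymm_one] at newton
  push_cast at newton
  linear_combination newton

end Newton

section Hook

variable (σ R : Type*) [Fintype σ] [DecidableEq σ] [CommRing R]

/-- The monomial symmetric polynomial `m_(a,1^r)` of the hook partition `(a, 1, …, 1)`
(for `2 ≤ a`). -/
noncomputable def hookSymm (a r : ℕ) : MvPolynomial σ R :=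
  ∑ A ∈ powersetCard r univ, ∑ i ∈ Aᶜ, X i ^ a * ∏ j ∈ A, X j

theorem hookSymm_zero (a : ℕ) : hookSymm σ R a 0 = psum σ R a := by
  simp [hookSymm, psum]

theorem psum_mul_esymm_succ (a r : ℕ) :
    psum σ R a * esymm σ R (r + 1) = hookSymm σ R (a + 1) r + hookSymm σ R a (r + 1) := by
  rw [hookSymm, hookSymm, ← sum_powersetCard_succ_sum_erase, ← sum_add_distrib, psum, esymm,
    sum_mul_sum, sum_comm]
  refine sum_congr rfl fun S _ => ?_
  rw [← sum_add_sum_compl S]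
  congr 1
  refine sum_congr rfl fun i hi => ?_
  rw [← mul_prod_erase S _ hi]
  ring

theorem sum_range_esymm_mul_psum (a r : ℕ) :
    ∑ i ∈ range (r + 1), (-1) ^ i * esymm σ R i * psum σ R (r + a - i)
      = (-1) ^ r * hookSymm σ R a r := by
  induction r generalizing a with
  | zero => simp [hookSymm_zero]
  | succ r ih =>
    have hshift : ∀ i, r + 1 + a - i = r + (a + 1) - i := fun i => by omega
    rw [sum_range_succ, Nat.add_sub_cancel_left]
    simp only [hshift, ih]
    linear_combination (-1) ^ (r + 1) * psum_mul_esymm_succ σ R a r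

theorem hookSymm_three (r : ℕ) :
    hookSymm σ R 3 r = ((r + 3 : ℕ) : MvPolynomial σ R) * esymm σ R (r + 3)
      - esymm σ R 1 * esymm σ R (r + 2) + psum σ R 2 * esymm σ R (r + 1) := by
  have newton := mul_esymm_eq_sum_range σ R (r + 3)
  rw [sum_range_succ, sum_range_succ, sum_range_esymm_mul_psum,
    show r + 3 - (r + 1) = 2 by omega, show r + 3 - (r + 2) = 1 by omega, psum_one,
    ← esymm_one] at newton
  have hsign : ((-1 : MvPolynomial σ R) ^ r) ^ 2 = 1 := by
    rw [← pow_mul, mul_comm, pow_mul, neg_one_sq, one_pow]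
  linear_combination -newton - (hookSymm σ R 3 r - esymm σ R (r + 1) * psum σ R 2
    + esymm σ R (r + 2) * esymm σ R 1) * hsign

end Hook

theorem homogeneousComponent_prod_X_pow_add_X {σ R : Type*} [DecidableEq σ] [CommRing R]
    {a r : ℕ} (ha : 2 ≤ a) {S : Finset σ} (hS : S.card = r + 1) :
    homogeneousComponent (r + a) (∏ i ∈ S, (X i ^ a + X i) : MvPolynomial σ R)
      = ∑ i ∈ S, X i ^ a * ∏ j ∈ S.erase i, X j := by
  rw [prod_add, map_sum]
  have key : ∀ t ∈ S.powerset,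
      homogeneousComponent (r + a) ((∏ i ∈ t, X i ^ a) * ∏ i ∈ S \ t, X i : MvPolynomial σ R)
        = if t.card = 1 then (∏ i ∈ t, X i ^ a) * ∏ i ∈ S \ t, X i else 0 := by
    intro t ht
    have htS : t ⊆ S := mem_powerset.mp ht
    have hpow : (∏ i ∈ t, X i ^ a : MvPolynomial σ R).IsHomogeneous (t.card * a) := by
      simpa using IsHomogeneous.prod t _ (fun _ => a) fun i _ => isHomogeneous_X_pow (R := R) i a
    have hlin : (∏ i ∈ S \ t, X i : MvPolynomial σ R).IsHomogeneous (S \ t).card := by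
      simpa using IsHomogeneous.prod (S \ t) _ (fun _ => 1) fun i _ => isHomogeneous_X R i
    rw [homogeneousComponent_of_mem ((mem_homogeneousSubmodule _ _).mpr (hpow.mul hlin))]
    have hdeg : r + a = t.card * a + (S \ t).card ↔ t.card = 1 := by
      have hle : t.card ≤ r + 1 := hS ▸ card_le_card htS
      rw [card_sdiff_of_subset htS, hS]
      generalize t.card = k at hle ⊢
      obtain _ | _ | k := k
      · omega
      · omega
      · refine ⟨fun h => ?_, by omega⟩
        nlinarith [Nat.sub_add_cancel hle]
    exact if_congr hdeg rfl rfl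
  rw [sum_congr rfl key, ← sum_filter, ← powersetCard_eq_filter, powersetCard_one, sum_map]
  simp [sdiff_singleton_eq_erase]

theorem homogeneousComponent_aeval_esymm {σ R : Type*} [Fintype σ] [DecidableEq σ] [CommRing R]
    {a : ℕ} (ha : 2 ≤ a) (r : ℕ) :
    homogeneousComponent (r + a) (aeval (fun i => X i + X i ^ a) (esymm σ R (r + 1)))
      = hookSymm σ R a r := by
  simp only [esymm, map_sum, map_prod, aeval_X, add_comm (X _)]
  rw [hookSymm, ← sum_powersetCard_succ_sum_erase]
  exact sum_congr rfl fun S hS =>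
    homogeneousComponent_prod_X_pow_add_X ha (mem_powersetCard_univ.mp hS)

end MvPolynomial

theorem stmt_5_general (n : ℕ) (m : ℕ) (hm1 : 1 ≤ m) :
    homogeneousComponent (m + 2)
      (aeval (fun i => X i + (X i) ^ 3) (esymm (Fin n) (ZMod 3) m)) =
    C ((m + 2 : ℕ) : ZMod 3) * esymm (Fin n) (ZMod 3) (m + 2)
      - esymm (Fin n) (ZMod 3) 1 * esymm (Fin n) (ZMod 3) (m + 1)
      + ((esymm (Fin n) (ZMod 3) 1) ^ 2 + esymm (Fin n) (ZMod 3) 2)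
        * esymm (Fin n) (ZMod 3) m := by
  obtain ⟨r, rfl⟩ : ∃ r, m = r + 1 := ⟨m - 1, by omega⟩
  have h3 : (3 : MvPolynomial (Fin n) (ZMod 3)) = 0 := CharP.ofNat_eq_zero _ 3
  rw [show r + 1 + 2 = r + 3 from rfl, homogeneousComponent_aeval_esymm (by norm_num),
    hookSymm_three, psum_two, C_eq_coe_nat]
  linear_combination -(esymm (Fin n) (ZMod 3) 2 * esymm (Fin n) (ZMod 3) (r + 1)) * h3

/-- Mod 3 Wu formula 𝒫¹c_m = (m+2)c_{m+2} − c₁c_{m+1} + (c₁² + c₂)c_m. -/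
theorem stmt_5 (n : ℕ) (hn : 1 ≤ n) (m : ℕ) (hm1 : 1 ≤ m) (hmn : m ≤ n) :
    homogeneousComponent (m + 2)
      (aeval (fun i => X i + (X i) ^ 3) (esymm (Fin n) (ZMod 3) m)) =
    C ((m + 2 : ℕ) : ZMod 3) * esymm (Fin n) (ZMod 3) (m + 2)
      - esymm (Fin n) (ZMod 3) 1 * esymm (Fin n) (ZMod 3) (m + 1)
      + ((esymm (Fin n) (ZMod 3) 1) ^ 2 + esymm (Fin n) (ZMod 3) 2)
        * esymm (Fin n) (ZMod 3) m :=
  stmt_5_general n m hm1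
end

section
/- Let D be the unique 𝔽₃-derivation on 𝔽₃[ω₁,ω₂,ω₃,ω₄] with D(ωᵢ) = ωᵢ³ for i=1,…,4. Define c_k = e_k(t₁,…,t₆) where t₁=ω₄, t₂=ω₃−ω₄, t₃=ω₂−ω₃, t₄=ω₁−ω₂+ω₃, t₅=ω₁−ω₃+ω₄, t₆=ω₁−ω₄, and set θ₂ = ω₁²−c₂ and θ₄ = c₂²−c₄. Then D(θ₂) − θ₄ lies in the ideal generated by θ₂ in 𝔽₃[ω₁,…,ω₄]. -/
/-!
The six linear forms `tᵢ` sum to `3ω₁ = 0`, so in characteristic 3 Newton's identities collapse to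
`c₂ = p₂` and `c₄ = -p₂² - p₄`, where `pₖ = ∑ tᵢᵏ`. Over `𝔽₃` a derivation with `D ωᵢ = ωᵢ³` acts
as the Frobenius on linear forms, so `D tᵢ = tᵢ³` and `D p₂ = 2 p₄`. Hence
`D θ₂ - θ₄ = 2ω₁⁴ - 2p₄ - 2p₂² - p₄ = p₂² - ω₁⁴ = -(ω₁² + c₂) θ₂`.
-/

open MvPolynomial Finset

lemma natCast_eq_zero_of_algebra_zmod {A : Type*} [CommRing A] (p : ℕ) [Algebra (ZMod p) A] :
    (p : A) = 0 := by
  rw [← map_natCast (algebraMap (ZMod p) A), ZMod.natCast_self, map_zero]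

section Frobenius

variable {R A : Type*} [CommSemiring R] [CommRing A] [Algebra R A] {p : ℕ} [ExpChar A p]
  (D : Derivation R A A) {a b : A}

lemma Derivation.map_add_eq_pow_of_eq_pow (ha : D a = a ^ p) (hb : D b = b ^ p) :
    D (a + b) = (a + b) ^ p := by
  rw [map_add, ha, hb, add_pow_expChar]

lemma Derivation.map_sub_eq_pow_of_eq_pow (ha : D a = a ^ p) (hb : D b = b ^ p) :
    D (a - b) = (a - b) ^ p := by
  rw [map_sub, ha, hb, sub_pow_expChar]

end Frobenius

section PowerSums

variable {σ R A : Type*} [Fintype σ] [CommSemiring R] [CommRing A] [Algebra R A] {t : σ → A}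

lemma Derivation.map_sum_sq_of_map_eq_pow_three (D : Derivation R A A)
    (hD : ∀ i, D (t i) = t i ^ 3) :
    D (∑ i, t i ^ 2) = 2 * ∑ i, t i ^ 4 := by
  simp only [map_sum, Derivation.leibniz_pow, hD, nsmul_eq_mul, smul_eq_mul, mul_sum]
  exact sum_congr rfl fun i _ => by ring

variable [Algebra (ZMod 3) A]

lemma aeval_psum (k : ℕ) : aeval t (psum σ (ZMod 3) k) = ∑ i, t i ^ k := by
  simp [psum]

lemma aeval_esymm_two_of_sum_eq_zero (ht : ∑ i, t i = 0) :
    aeval t (esymm σ (ZMod 3) 2) = ∑ i, t i ^ 2 := by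
  have h := congrArg (aeval t) (mul_esymm_eq_sum σ (ZMod 3) 2)
  rw [show {a ∈ antidiagonal 2 | a.1 < 2} = {(0, 2), (1, 1)} by decide,
    sum_pair (by decide)] at h
  simp only [map_mul, map_add, map_pow, map_neg, map_one, map_natCast, esymm_zero, esymm_one,
    psum_one, aeval_psum, map_sum, aeval_X, ht] at h
  linear_combination -h + aeval t (esymm σ (ZMod 3) 2) * natCast_eq_zero_of_algebra_zmod (A := A) 3

lemma aeval_esymm_four_of_sum_eq_zero (ht : ∑ i, t i = 0) :
    aeval t (esymm σ (ZMod 3) 4) = -(∑ i, t i ^ 2) ^ 2 - ∑ i, t i ^ 4 := by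
  have h := congrArg (aeval t) (mul_esymm_eq_sum σ (ZMod 3) 4)
  rw [show {a ∈ antidiagonal 4 | a.1 < 4} = {(0, 4), (1, 3), (2, 2), (3, 1)} by decide,
    sum_insert (by decide), sum_insert (by decide), sum_pair (by decide)] at h
  simp only [map_mul, map_add, map_pow, map_neg, map_one, map_natCast, esymm_zero, esymm_one,
    psum_one, aeval_psum, map_sum, aeval_X, ht, aeval_esymm_two_of_sum_eq_zero ht] at h
  linear_combination h - aeval t (esymm σ (ZMod 3) 4) * natCast_eq_zero_of_algebra_zmod (A := A) 3

theorem Derivation.map_theta_two_sub_theta_four (D : Derivation R A A) (ω : A)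
    (hω : D ω = ω ^ 3) (hD : ∀ i, D (t i) = t i ^ 3) (ht : ∑ i, t i = 0) :
    D (ω ^ 2 - aeval t (esymm σ (ZMod 3) 2)) -
        (aeval t (esymm σ (ZMod 3) 2) ^ 2 - aeval t (esymm σ (ZMod 3) 4)) =
      -(ω ^ 2 + aeval t (esymm σ (ZMod 3) 2)) * (ω ^ 2 - aeval t (esymm σ (ZMod 3) 2)) := by
  rw [aeval_esymm_two_of_sum_eq_zero ht, aeval_esymm_four_of_sum_eq_zero ht, map_sub,
    D.map_sum_sq_of_map_eq_pow_three hD, Derivation.leibniz_pow, hω]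
  simp only [nsmul_eq_mul, smul_eq_mul]
  linear_combination
    (ω ^ 4 - ∑ i, t i ^ 4 - (∑ i, t i ^ 2) ^ 2) * natCast_eq_zero_of_algebra_zmod (A := A) 3

end PowerSums

/-- For (F₄, 3): 𝒫¹θ₂ ≡ θ₄ mod ⟨θ₂⟩, the instance b_{2,4} = 1 of Lemma 2.2. -/
theorem stmt_10
    (D : Derivation (ZMod 3) (MvPolynomial (Fin 4) (ZMod 3))
        (MvPolynomial (Fin 4) (ZMod 3)))
    (hD : ∀ i : Fin 4, D (X i) = (X i) ^ 3) :
    let ω : Fin 4 → MvPolynomial (Fin 4) (ZMod 3) := X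
    let t : Fin 6 → MvPolynomial (Fin 4) (ZMod 3) :=
      ![ω 3, ω 2 - ω 3, ω 1 - ω 2, ω 0 - ω 1 + ω 2, ω 0 - ω 2 + ω 3, ω 0 - ω 3]
    let c : ℕ → MvPolynomial (Fin 4) (ZMod 3) :=
      fun k => aeval t (esymm (Fin 6) (ZMod 3) k)
    let θ₂ := (ω 0) ^ 2 - c 2
    let θ₄ := (c 2) ^ 2 - c 4
    D θ₂ - θ₄ ∈ Ideal.span {θ₂} := by
  intro ω t c θ₂ θ₄
  have hDt : ∀ i, D (t i) = t i ^ 3 := by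
    intro i
    fin_cases i <;> simp only [t, ω] <;>
      repeat first
        | exact hD _
        | apply D.map_add_eq_pow_of_eq_pow
        | apply D.map_sub_eq_pow_of_eq_pow
  have hsum : ∑ i, t i = 0 := by
    simp only [Fin.sum_univ_six, t, ω, Matrix.cons_val]
    linear_combination X 0 * natCast_eq_zero_of_algebra_zmod (A := MvPolynomial (Fin 4) (ZMod 3)) 3
  exact Ideal.mem_span_singleton'.mpr
    ⟨_, (D.map_theta_two_sub_theta_four (ω 0) (hD 0) hDt hsum).symm⟩
end
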